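/- For 0 < b < 1, q > 0, and all w ≥ 0, the confluent hypergeometric function satisfies M(b−1, b+q+1, w) ≥ M(b−1, b+q, w) and M(b, b+q, w) ≥ M(b, b+q+1, w) ≥ 1 > 0. -/

import Mathlib

/-!
The `i`-th term of `M(a, c, w)` depends on `c` only through the factor `1 / (c)_i`, which is
positive and decreasing in `c > 0`. For `-1 ≤ a ≤ 0` the numerators `(a)_i`, `i ≥ 1`, are `≤ 0`,
so every term increases with `c`; for `a ≥ 0` and `w ≥ 0` every term is `≥ 0` and decreases
with `c`, and the sum is at least its zeroth term `1`. The series converge by the ratio test.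
-/

/-- Kummer's confluent hypergeometric function `M(a, c, w)`. -/
noncomputable def kummerM (a c w : ℝ) : ℝ :=
  ∑' i : ℕ, ((ascPochhammer ℝ i).eval a / (ascPochhammer ℝ i).eval c) * w ^ i / (Nat.factorial i)

/-- The Beta function as an integral. -/
noncomputable def betaFn (x y : ℝ) : ℝ :=
  ∫ t in (0:ℝ)..1, t ^ (x - 1) * (1 - t) ^ (y - 1)

open Filter Polynomial

lemma ascPochhammer_eval_nonneg {x : ℝ} (hx : 0 ≤ x) (n : ℕ) :
    0 ≤ (ascPochhammer ℝ n).eval x := by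
  induction n with
  | zero => simp
  | succ n ih => rw [ascPochhammer_succ_eval]; positivity

lemma ascPochhammer_eval_le_of_le {x y : ℝ} (hx : 0 ≤ x) (hxy : x ≤ y) (n : ℕ) :
    (ascPochhammer ℝ n).eval x ≤ (ascPochhammer ℝ n).eval y := by
  induction n with
  | zero => simp
  | succ n ih =>
    simp only [ascPochhammer_succ_eval]
    gcongr
    exact (ascPochhammer_eval_nonneg hx n).trans ih

lemma ascPochhammer_eval_nonpos {a : ℝ} (ha₀ : a ≤ 0) (ha₁ : -1 ≤ a) {n : ℕ} (hn : n ≠ 0) :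
    (ascPochhammer ℝ n).eval a ≤ 0 := by
  obtain ⟨m, rfl⟩ := Nat.exists_eq_succ_of_ne_zero hn
  have h : (ascPochhammer ℝ (m + 1)).eval a = a * (ascPochhammer ℝ m).eval (a + 1) := by
    simp [ascPochhammer_succ_left, eval_comp]
  rw [h]
  exact mul_nonpos_of_nonpos_of_nonneg ha₀ (ascPochhammer_eval_nonneg (by linarith) m)

lemma inv_ascPochhammer_eval_anti {c c' : ℝ} (hc : 0 < c) (hcc' : c ≤ c') (n : ℕ) :
    ((ascPochhammer ℝ n).eval c')⁻¹ ≤ ((ascPochhammer ℝ n).eval c)⁻¹ :=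
  inv_anti₀ (ascPochhammer_pos n c hc) (ascPochhammer_eval_le_of_le hc.le hcc' n)

noncomputable def kummerTerm (a c w : ℝ) (i : ℕ) : ℝ :=
  ((ascPochhammer ℝ i).eval a / (ascPochhammer ℝ i).eval c) * w ^ i / (Nat.factorial i)

lemma kummerM_eq_tsum (a c w : ℝ) : kummerM a c w = ∑' i, kummerTerm a c w i := rfl

lemma kummerTerm_zero (a c w : ℝ) : kummerTerm a c w 0 = 1 := by
  simp [kummerTerm]

lemma kummerTerm_eq_mul_inv (a c w : ℝ) (i : ℕ) :
    kummerTerm a c w i =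
      (ascPochhammer ℝ i).eval a * w ^ i / (Nat.factorial i) * ((ascPochhammer ℝ i).eval c)⁻¹ := by
  simp only [kummerTerm]; ring

lemma kummerTerm_succ (a c w : ℝ) (n : ℕ) :
    kummerTerm a c w (n + 1) = kummerTerm a c w n * ((a + n) / (c + n) * (w / (n + 1))) := by
  simp only [kummerTerm, ascPochhammer_succ_eval, pow_succ, Nat.factorial_succ, Nat.cast_mul,
    Nat.cast_succ, div_eq_mul_inv, mul_inv]
  ring

lemma abs_add_natCast_div_le {a c : ℝ} (hc : 0 < c) (n : ℕ) :
    |a + n| / (c + n) ≤ |a| / c + 1 := by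
  have hn : (0 : ℝ) ≤ n := n.cast_nonneg
  rw [div_le_iff₀ (by positivity)]
  calc |a + n| ≤ |a| + n := by simpa [abs_of_nonneg hn] using abs_add_le a n
    _ ≤ (|a| / c + 1) * (c + n) := by
      field_simp
      nlinarith [abs_nonneg a]

lemma summable_kummerTerm (a : ℝ) {c : ℝ} (hc : 0 < c) (w : ℝ) : Summable (kummerTerm a c w) := by
  set K := |a| / c + 1
  refine summable_of_ratio_norm_eventually_le (r := 1 / 2) (by norm_num) ?_
  filter_upwards [eventually_ge_atTop ⌈2 * K * |w|⌉₊] with n hn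
  have hn' : 2 * K * |w| ≤ n + 1 := by
    have := Nat.le_of_ceil_le hn
    linarith
  have hratio : |(a + n) / (c + n) * (w / (n + 1))| ≤ 1 / 2 := by
    rw [abs_mul, abs_div, abs_div, abs_of_pos (by positivity : 0 < c + n),
      abs_of_pos (by positivity : (0 : ℝ) < n + 1)]
    calc |a + n| / (c + n) * (|w| / (n + 1)) ≤ K * (|w| / (n + 1)) := by
          gcongr; exact abs_add_natCast_div_le hc n
      _ ≤ 1 / 2 := by
          rw [mul_div_assoc', div_le_iff₀ (by positivity)]
          linarith
  rw [kummerTerm_succ, norm_mul, mul_comm]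
  exact mul_le_mul_of_nonneg_right hratio (norm_nonneg _)

lemma kummerM_le_kummerM_of_nonneg {a c c' w : ℝ} (ha : 0 ≤ a) (hw : 0 ≤ w) (hc : 0 < c)
    (hcc' : c ≤ c') : kummerM a c' w ≤ kummerM a c w := by
  rw [kummerM_eq_tsum, kummerM_eq_tsum]
  refine (summable_kummerTerm a (hc.trans_le hcc') w).tsum_le_tsum (fun i => ?_)
    (summable_kummerTerm a hc w)
  rw [kummerTerm_eq_mul_inv, kummerTerm_eq_mul_inv]
  have hnum : 0 ≤ (ascPochhammer ℝ i).eval a * w ^ i / (Nat.factorial i) := by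
    have := ascPochhammer_eval_nonneg ha i
    positivity
  exact mul_le_mul_of_nonneg_left (inv_ascPochhammer_eval_anti hc hcc' i) hnum

lemma kummerM_le_kummerM_of_nonpos {a c c' w : ℝ} (ha₀ : a ≤ 0) (ha₁ : -1 ≤ a) (hw : 0 ≤ w)
    (hc : 0 < c) (hcc' : c ≤ c') : kummerM a c w ≤ kummerM a c' w := by
  rw [kummerM_eq_tsum, kummerM_eq_tsum]
  refine (summable_kummerTerm a hc w).tsum_le_tsum (fun i => ?_)
    (summable_kummerTerm a (hc.trans_le hcc') w)
  rcases eq_or_ne i 0 with rfl | hi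
  · simp only [kummerTerm_zero, le_refl]
  rw [kummerTerm_eq_mul_inv, kummerTerm_eq_mul_inv]
  have hnum : (ascPochhammer ℝ i).eval a * w ^ i / (Nat.factorial i) ≤ 0 :=
    div_nonpos_of_nonpos_of_nonneg
      (mul_nonpos_of_nonpos_of_nonneg (ascPochhammer_eval_nonpos ha₀ ha₁ hi) (by positivity))
      (by positivity)
  exact mul_le_mul_of_nonpos_left (inv_ascPochhammer_eval_anti hc hcc' i) hnum

lemma kummerTerm_nonneg {a c w : ℝ} (ha : 0 ≤ a) (hc : 0 < c) (hw : 0 ≤ w) (i : ℕ) :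
    0 ≤ kummerTerm a c w i := by
  have := ascPochhammer_eval_nonneg ha i
  have := ascPochhammer_pos i c hc
  unfold kummerTerm
  positivity

lemma one_le_kummerM {a c w : ℝ} (ha : 0 ≤ a) (hc : 0 < c) (hw : 0 ≤ w) : 1 ≤ kummerM a c w := by
  rw [kummerM_eq_tsum, ← kummerTerm_zero a c w]
  exact (summable_kummerTerm a hc w).le_tsum 0 fun i _ => kummerTerm_nonneg ha hc hw i

theorem kummer_inequalities (b q w : ℝ) (hb0 : 0 < b) (hb1 : b < 1) (hq : 0 < q) (hw : 0 ≤ w) :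
    kummerM (b - 1) (b + q + 1) w ≥ kummerM (b - 1) (b + q) w ∧
    kummerM b (b + q) w ≥ kummerM b (b + q + 1) w ∧
    kummerM b (b + q + 1) w ≥ 1 ∧ (1:ℝ) > 0 := by
  have hc : 0 < b + q := by positivity
  refine ⟨?_, ?_, ?_, one_pos⟩
  · exact kummerM_le_kummerM_of_nonpos (by linarith) (by linarith) hw hc (by linarith)
  · exact kummerM_le_kummerM_of_nonneg hb0.le hw hc (by linarith)
  · exact one_le_kummerM hb0.le (by positivity) hw
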